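/- arXiv:2210.12438 — 5 statements merged into one kernel-verified Lean document; each statement's English description precedes it below -/
import Mathlib

section
/- Let (X, d) be a pseudo-metric space, let X₀ be a finite subset of X, and let k > 0. Then the minimum k-median cost when centers are restricted to X₀ is at most twice the minimum k-median cost when centers may be chosen anywhere in X. That is, min over C ⊆ X₀ with |C| = k of Σ_{x ∈ X₀} min_{c ∈ C} d(x, c) is at most 2 · min over C ⊆ X with |C| = k of Σ_{x ∈ X₀} min_{c ∈ C} d(x, c). -/
theorem kmedian_restricted_centers {X : Type*} [DecidableEq X] (d : X → X → ℝ)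
    (hself : ∀ x, d x x = 0)
    (hsymm : ∀ x y, d x y = d y x)
    (htri : ∀ x y z, d x z ≤ d x y + d y z)
    (X₀ : Finset X) (k : ℕ) (hk : 0 < k) (hcard : k ≤ X₀.card) :
    ∃ (C : Finset X) (hC : C.Nonempty), C ⊆ X₀ ∧ C.card = k ∧
      ∀ (C' : Finset X) (hC' : C'.Nonempty), C'.card = k →
        ∑ x ∈ X₀, C.inf' hC (fun c => d x c) ≤ 2 * ∑ x ∈ X₀, C'.inf' hC' (fun c => d x c) := by
  classical
  have hX₀ne : X₀.Nonempty := Finset.card_pos.mp (lt_of_lt_of_le hk hcard)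
  -- cost function (well-defined for nonempty sets)
  set f : Finset X → ℝ := fun C =>
    if h : C.Nonempty then ∑ x ∈ X₀, C.inf' h (fun c => d x c) else 0 with hf
  -- choose the minimizing subset of X₀ of cardinality k
  have hSne : (X₀.powersetCard k).Nonempty := by
    rwa [Finset.powersetCard_nonempty]
  obtain ⟨C, hCmem, hCmin⟩ := (X₀.powersetCard k).exists_min_image f hSne
  rw [Finset.mem_powersetCard] at hCmem
  obtain ⟨hCsub, hCcard⟩ := hCmem
  have hCne : C.Nonempty := Finset.card_pos.mp (hCcard ▸ hk)
  refine ⟨C, hCne, hCsub, hCcard, ?_⟩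
  intro C' hC' hC'card
  -- projection of a point to a nearest point of X₀
  have projex : ∀ c : X, ∃ p, p ∈ X₀ ∧ ∀ y ∈ X₀, d c p ≤ d c y := by
    intro c
    obtain ⟨p, hp, hmin⟩ := X₀.exists_min_image (fun y => d c y) hX₀ne
    exact ⟨p, hp, hmin⟩
  choose proj hprojmem hprojmin using projex
  -- the padded projection set
  have hPsub : C'.image proj ⊆ X₀ := by
    intro p hp
    obtain ⟨c, _, rfl⟩ := Finset.mem_image.mp hp
    exact hprojmem c
  have hPcard : (C'.image proj).card ≤ k := hC'card ▸ Finset.card_image_le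
  obtain ⟨C'', hPC'', hC''sub, hC''card⟩ :=
    Finset.exists_subsuperset_card_eq hPsub hPcard hcard
  have hC''ne : C''.Nonempty := Finset.card_pos.mp (hC''card ▸ hk)
  -- key pointwise bound
  have key : ∀ x ∈ X₀, C''.inf' hC''ne (fun c => d x c) ≤
      2 * C'.inf' hC' (fun c => d x c) := by
    intro x hx
    obtain ⟨c, hc, hceq⟩ := C'.exists_mem_eq_inf' hC' (fun c => d x c)
    have h1 : C''.inf' hC''ne (fun c => d x c) ≤ d x (proj c) :=
      Finset.inf'_le _ (hPC'' (Finset.mem_image_of_mem proj hc))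
    have h2 : d x (proj c) ≤ d x c + d c (proj c) := htri x c (proj c)
    have h3 : d c (proj c) ≤ d c x := hprojmin c x hx
    calc C''.inf' hC''ne (fun c => d x c) ≤ d x c + d c x := by linarith
      _ = 2 * d x c := by rw [hsymm c x]; ring
      _ = 2 * C'.inf' hC' (fun c => d x c) := by rw [hceq]
  have hstep : ∑ x ∈ X₀, C''.inf' hC''ne (fun c => d x c) ≤
      2 * ∑ x ∈ X₀, C'.inf' hC' (fun c => d x c) := by
    rw [Finset.mul_sum]
    exact Finset.sum_le_sum key
  have hmin := hCmin C'' (Finset.mem_powersetCard.mpr ⟨hC''sub, hC''card⟩)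
  rw [hf] at hmin
  simp only [dif_pos hCne, dif_pos hC''ne] at hmin
  exact hmin.trans hstep
end

section
/- Let F be a class of real-valued functions on a set X with pseudo-dimension d, and let F^k be the class of functions of the form x ↦ min_{ℓ ∈ [k]} f^ℓ(x) with f^1, ..., f^k ∈ F. Then the pseudo-dimension of F^k is O(dk log(dk)). -/
/-- A finite set `C` is (pseudo-)shattered by a class `F` of real-valued functions if
there are thresholds `r` such that every subset of `C` is cut out by some `f ∈ F`. -/
def PShatters {X : Type*} (F : Set (X → ℝ)) (C : Finset X) : Prop :=
  ∃ r : X → ℝ, ∀ C' ⊆ C, ∃ f ∈ F, ∀ x ∈ C, (f x ≤ r x ↔ x ∈ C')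

/-- The pseudo-dimension of `F` is at most `d`. -/
def PDimLE {X : Type*} (F : Set (X → ℝ)) (d : ℕ) : Prop :=
  ∀ C : Finset X, PShatters F C → C.card ≤ d

/-!
Fix thresholds `r` witnessing that the class of `k`-fold minima shatters `C`, so that all
`2 ^ |C|` subsets of `C` occur as sublevel traces `{x ∈ C | g x ≤ r x}`. The sublevel trace of a
minimum is the union of the sublevel traces of its terms, so there are at most `N ^ k` of them,
where `N` is the number of sublevel traces of `F` on `C`. These form a set family of VC dimension
at most `d`, so `N ≤ (|C| + 1) ^ d` by the Sauer–Shelah lemma. Hence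
`2 ^ |C| ≤ (|C| + 1) ^ (dk)`, which forces `|C| = O(dk log(dk))`.
-/

open Finset

theorem ciInf_le_iff_exists_of_finite {ι α : Type*} [ConditionallyCompleteLinearOrder α]
    [Nonempty ι] [Finite ι] (f : ι → α) (a : α) : ⨅ i, f i ≤ a ↔ ∃ i, f i ≤ a := by
  refine ⟨fun h => ?_, fun ⟨i, hi⟩ => (ciInf_le (Set.finite_range f).bddBelow i).trans hi⟩
  obtain ⟨i, hi⟩ := exists_eq_ciInf_of_finite (f := f)
  exact ⟨i, hi ▸ h⟩

namespace Nat

theorem sum_Iic_choose_le_succ_pow (n d : ℕ) : ∑ i ∈ Iic d, n.choose i ≤ (n + 1) ^ d := by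
  rw [← range_succ_eq_Iic, add_pow]
  refine sum_le_sum fun i hi => ?_
  calc n.choose i ≤ n ^ i := choose_le_pow n i
    _ ≤ n ^ i * 1 ^ (d - i) * d.choose i := by
      rw [one_pow, mul_one]
      exact Nat.le_mul_of_pos_right _ (choose_pos (Nat.lt_succ_iff.1 (mem_range.1 hi)))

theorem le_mul_log_of_two_pow_le_succ_pow {S m : ℕ} (h : 2 ^ S ≤ (S + 1) ^ m) :
    S ≤ m * (log 2 (S + 1) + 1) := by
  suffices 2 ^ S < 2 ^ (m * (log 2 (S + 1) + 1) + 1) by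
    have := (Nat.pow_lt_pow_iff_right one_lt_two).1 this
    omega
  calc 2 ^ S ≤ (S + 1) ^ m := h
    _ ≤ (2 ^ (log 2 (S + 1) + 1)) ^ m :=
      Nat.pow_le_pow_left (lt_pow_succ_log_self one_lt_two _).le m
    _ < 2 ^ (m * (log 2 (S + 1) + 1) + 1) := by
      rw [← pow_mul, mul_comm]
      exact Nat.pow_lt_pow_succ one_lt_two

theorem le_seven_mul_log_of_two_pow_le_succ_pow {S m : ℕ} (h : 2 ^ S ≤ (S + 1) ^ m) :
    S ≤ 7 * m * (log 2 m + 1) := by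
  have hS := le_mul_log_of_two_pow_le_succ_pow h
  rcases Nat.eq_zero_or_pos m with rfl | hm
  · simpa using hS
  set L := log 2 (S + 1)
  set A := log 2 m
  -- `L + 1 < 2 ^ (L / 2 + 2)`, so `2 ^ L ≤ 2m(L + 1)` forces `L ≤ 2A + 6`.
  have hL : 2 ^ L < 2 ^ (A + L / 2 + 4) :=
    calc 2 ^ L ≤ S + 1 := pow_log_le_self 2 (succ_ne_zero S)
      _ ≤ 2 * (m * (L + 1)) := by nlinarith
      _ < 2 * (2 ^ (A + 1) * 2 ^ (L / 2 + 2)) := by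
        have hm' : m < 2 ^ (A + 1) := lt_pow_succ_log_self one_lt_two m
        have hL' : L + 1 < 2 ^ (L / 2 + 2) := by
          have := (Nat.lt_two_pow_self (n := L / 2 + 1))
          rw [pow_succ]
          omega
        have := Nat.mul_lt_mul'' hm' hL'
        omega
      _ = 2 ^ (A + L / 2 + 4) := by ring
  have hLA : L ≤ 2 * A + 6 := by
    have := (Nat.pow_lt_pow_iff_right one_lt_two).1 hL
    omega
  calc S ≤ m * (L + 1) := hS
    _ ≤ m * (2 * A + 7) := Nat.mul_le_mul_left _ (by omega)
    _ ≤ 7 * m * (A + 1) := by nlinarith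

end Nat

theorem Finset.card_le_card_add_one_pow_vcDim {α : Type*} [Fintype α] [DecidableEq α]
    (𝒜 : Finset (Finset α)) : #𝒜 ≤ (Fintype.card α + 1) ^ 𝒜.vcDim :=
  calc #𝒜 ≤ #𝒜.shatterer := card_le_card_shatterer 𝒜
    _ ≤ ∑ i ∈ Iic 𝒜.vcDim, (Fintype.card α).choose i := card_shatterer_le_sum_vcDim
    _ ≤ (Fintype.card α + 1) ^ 𝒜.vcDim := Nat.sum_Iic_choose_le_succ_pow _ _

section Pseudodimension

variable {X : Type*}

noncomputable def sublevelTrace (C : Finset X) (r f : X → ℝ) : Finset C :=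
  {a | f a ≤ r a}

open Classical in
noncomputable def sublevelTraces (F : Set (X → ℝ)) (C : Finset X) (r : X → ℝ) :
    Finset (Finset C) :=
  {t | ∃ f ∈ F, sublevelTrace C r f = t}

theorem mem_sublevelTraces {F : Set (X → ℝ)} {C : Finset X} {r : X → ℝ} {t : Finset C} :
    t ∈ sublevelTraces F C r ↔ ∃ f ∈ F, sublevelTrace C r f = t := by
  simp [sublevelTraces]

def minClass (F : Set (X → ℝ)) (k : ℕ) : Set (X → ℝ) :=
  {g | ∃ f : Fin k → X → ℝ, (∀ ℓ, f ℓ ∈ F) ∧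
    g = fun x => ⨅ ℓ : Fin k, f ℓ x}

theorem PShatters.exists_sublevelTraces_eq_univ {F : Set (X → ℝ)} {C : Finset X}
    (h : PShatters F C) : ∃ r, sublevelTraces F C r = univ := by
  obtain ⟨r, hr⟩ := h
  refine ⟨r, eq_univ_of_forall fun t => mem_sublevelTraces.2 ?_⟩
  obtain ⟨f, hfF, hf⟩ := hr (t.map (Function.Embedding.subtype _))
    (by exact_mod_cast map_subtype_subset t)
  refine ⟨f, hfF, ext fun a => ?_⟩
  simpa [sublevelTrace] using hf a a.2

theorem vcDim_sublevelTraces_le [DecidableEq X] {F : Set (X → ℝ)} {d : ℕ} (hF : PDimLE F d)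
    (C : Finset X) (r : X → ℝ) : (sublevelTraces F C r).vcDim ≤ d := by
  refine Finset.sup_le fun s hs => ?_
  suffices PShatters F (s.map (Function.Embedding.subtype _)) by simpa using hF _ this
  refine ⟨r, fun C' hC' => ?_⟩
  obtain ⟨u, hu, hsu⟩ := mem_shatterer.1 hs (filter_subset (fun a => a.1 ∈ C') s)
  obtain ⟨f, hfF, rfl⟩ := mem_sublevelTraces.1 hu
  refine ⟨f, hfF, fun x hx => ?_⟩
  obtain ⟨a, has, rfl⟩ := mem_map.1 hx
  have := congrArg (a ∈ ·) hsu
  simpa [sublevelTrace, has] using this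

theorem sublevelTrace_iInf [DecidableEq X] {ι : Type*} [Fintype ι] [Nonempty ι] (C : Finset X)
    (r : X → ℝ) (f : ι → X → ℝ) :
    sublevelTrace C r (fun x => ⨅ i, f i x) = univ.sup fun i => sublevelTrace C r (f i) := by
  ext a
  simp [sublevelTrace, ciInf_le_iff_exists_of_finite]

theorem card_sublevelTraces_minClass_le {k : ℕ} (hk : 0 < k) (F : Set (X → ℝ)) (C : Finset X)
    (r : X → ℝ) : #(sublevelTraces (minClass F k) C r) ≤ #(sublevelTraces F C r) ^ k := by
  classical
  have : Nonempty (Fin k) := ⟨⟨0, hk⟩⟩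
  rw [← Fintype.card_piFinset_const]
  refine card_le_card_of_surjOn (fun t => univ.sup t) fun t ht => ?_
  obtain ⟨g, ⟨f, hfF, rfl⟩, rfl⟩ := mem_sublevelTraces.1 ht
  refine ⟨fun ℓ => sublevelTrace C r (f ℓ), ?_, (sublevelTrace_iInf C r f).symm⟩
  simpa [mem_sublevelTraces] using fun ℓ => ⟨f ℓ, hfF ℓ, rfl⟩

theorem card_sublevelTraces_le {F : Set (X → ℝ)} {d : ℕ} (hF : PDimLE F d) (C : Finset X)
    (r : X → ℝ) : #(sublevelTraces F C r) ≤ (#C + 1) ^ d := by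
  classical
  calc #(sublevelTraces F C r) ≤ (Fintype.card C + 1) ^ (sublevelTraces F C r).vcDim :=
        card_le_card_add_one_pow_vcDim _
    _ ≤ (#C + 1) ^ d := by
      rw [Fintype.card_coe]
      exact Nat.pow_le_pow_right (Nat.succ_pos _) (vcDim_sublevelTraces_le hF C r)

end Pseudodimension

/-- If `F` has pseudo-dimension at most `d`, then the class of pointwise minima of `k`
functions from `F` has pseudo-dimension `O(dk log(dk))`. -/
theorem pdim_min_of_k {X : Type*} :
    ∃ c : ℕ, 0 < c ∧
      ∀ (F : Set (X → ℝ)) (d k : ℕ), 0 < d → 0 < k → PDimLE F d →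
        PDimLE {g : X → ℝ | ∃ f : Fin k → X → ℝ, (∀ ℓ, f ℓ ∈ F) ∧
            g = fun x => ⨅ ℓ : Fin k, f ℓ x}
          (c * d * k * (Nat.log 2 (d * k) + 1)) := by
  refine ⟨7, by norm_num, fun F d k _ hk hF C hC => ?_⟩
  obtain ⟨r, hr⟩ := PShatters.exists_sublevelTraces_eq_univ (F := minClass F k) hC
  have hcount : 2 ^ #C ≤ (#C + 1) ^ (d * k) :=
    calc 2 ^ #C = #(sublevelTraces (minClass F k) C r) := by
          rw [hr, card_univ, Fintype.card_finset, Fintype.card_coe]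
      _ ≤ #(sublevelTraces F C r) ^ k := card_sublevelTraces_minClass_le hk F C r
      _ ≤ ((#C + 1) ^ d) ^ k := Nat.pow_le_pow_left (card_sublevelTraces_le hF C r) k
      _ = (#C + 1) ^ (d * k) := (pow_mul _ _ _).symm
  calc #C ≤ 7 * (d * k) * (Nat.log 2 (d * k) + 1) :=
        Nat.le_seven_mul_log_of_two_pow_le_succ_pow hcount
    _ = 7 * d * k * (Nat.log 2 (d * k) + 1) := by ring
end

section
/- For a single-machine schedule that processes jobs in the order given by a permutation σ, the total completion time satisfies cost(J, σ) − OPT(J) = Σ_{i,j: p_i < p_j, i after j in σ} (p_j − p_i); that is, the error of a predicted permutation equals the sum over all inverted pairs of the absolute difference of their sizes. -/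
/-- The error of scheduling in the order of a permutation `σ` equals the sum, over all
inverted pairs, of the absolute size difference.  Jobs are indexed so that `p` is
nondecreasing, hence the identity order is optimal (SJF); `i` comes after `j` in `σ`
iff `σ.symm j < σ.symm i`. -/
theorem perm_cost_sub_opt_eq_inversions (n : ℕ) (p : Fin n → ℝ)
    (hp : ∀ i, 0 < p i) (hmono : Monotone p) (σ : Equiv.Perm (Fin n)) :
    (∑ t : Fin n, ∑ s ∈ Finset.univ.filter (fun s : Fin n => s ≤ t), p (σ s)) -
        (∑ t : Fin n, ∑ s ∈ Finset.univ.filter (fun s : Fin n => s ≤ t), p s) =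
      ∑ i : Fin n,
        ∑ j ∈ Finset.univ.filter (fun j : Fin n => p i < p j ∧ σ.symm j < σ.symm i),
          (p j - p i) := by
  classical
  set f : Fin n → Fin n → ℝ := fun i j =>
    (if σ.symm i ≤ σ.symm j then p i else 0) - (if i ≤ j then p i else 0) with hf
  set g : Fin n → Fin n → ℝ := fun i j =>
    if p i < p j ∧ σ.symm j < σ.symm i then p j - p i else 0 with hg
  have hcost : (∑ t : Fin n, ∑ s ∈ Finset.univ.filter (fun s : Fin n => s ≤ t), p (σ s))
      = ∑ j : Fin n, ∑ i : Fin n, (if σ.symm i ≤ σ.symm j then p i else 0) := by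
    rw [← Equiv.sum_comp σ.symm (fun t => ∑ s ∈ Finset.univ.filter (fun s : Fin n => s ≤ t), p (σ s))]
    refine Finset.sum_congr rfl fun j _ => ?_
    rw [Finset.sum_filter, ← Equiv.sum_comp σ.symm
      (fun s => if s ≤ σ.symm j then p (σ s) else 0)]
    simp
  have hopt : (∑ t : Fin n, ∑ s ∈ Finset.univ.filter (fun s : Fin n => s ≤ t), p s)
      = ∑ j : Fin n, ∑ i : Fin n, (if i ≤ j then p i else 0) := by
    simp [Finset.sum_filter]
  have hrhs : (∑ i : Fin n,
        ∑ j ∈ Finset.univ.filter (fun j : Fin n => p i < p j ∧ σ.symm j < σ.symm i),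
          (p j - p i)) = ∑ i : Fin n, ∑ j : Fin n, g i j := by
    simp only [Finset.sum_filter, hg]
  have hlhs : (∑ t : Fin n, ∑ s ∈ Finset.univ.filter (fun s : Fin n => s ≤ t), p (σ s)) -
        (∑ t : Fin n, ∑ s ∈ Finset.univ.filter (fun s : Fin n => s ≤ t), p s)
      = ∑ i : Fin n, ∑ j : Fin n, f i j := by
    rw [hcost, hopt, ← Finset.sum_sub_distrib]
    rw [Finset.sum_comm]
    refine Finset.sum_congr rfl fun i _ => ?_
    rw [← Finset.sum_sub_distrib]
  rw [hlhs, hrhs]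
  -- key pairwise lemma
  have key : ∀ i j : Fin n, i < j → f i j + f j i = g i j + g j i := by
    intro i j hij
    have hne : i ≠ j := hij.ne
    have hsne : σ.symm i ≠ σ.symm j := fun h => hne (σ.symm.injective h)
    have hple : p i ≤ p j := hmono hij.le
    have hnpj : ¬ p j < p i := not_lt.2 hple
    have hnji : ¬ j ≤ i := not_le.2 hij
    by_cases hs : σ.symm i ≤ σ.symm j
    · have hns : ¬ σ.symm j ≤ σ.symm i := fun h => hsne (le_antisymm hs h)
      have hns' : ¬ σ.symm j < σ.symm i := fun h => hns h.le
      have hns'' : ¬ σ.symm i < σ.symm j → True := fun _ => trivial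
      simp [hf, hg, hs, hns, hij.le, hnji, hns', hnpj]
    · have hlt : σ.symm j < σ.symm i := lt_of_not_ge hs
      rcases hple.lt_or_eq with hplt | hpeq
      · simp [hf, hg, hs, hlt, hlt.le, hij.le, hnji, hplt, hnpj, not_lt.2 hlt.le]
        ring
      · simp [hf, hg, hs, hlt, hlt.le, hij.le, hnji, hpeq, hnpj, not_lt.2 hlt.le]
  have keyall : ∀ i j : Fin n, f i j + f j i = g i j + g j i := by
    intro i j
    rcases lt_trichotomy i j with h | rfl | h
    · exact key i j h
    · simp [hf, hg]
    · have := key j i h; linarith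
  have hsum : ∑ i : Fin n, ∑ j : Fin n, (f i j + f j i)
      = ∑ i : Fin n, ∑ j : Fin n, (g i j + g j i) := by
    exact Finset.sum_congr rfl fun i _ => Finset.sum_congr rfl fun j _ => keyall i j
  have hfs : ∑ i : Fin n, ∑ j : Fin n, f j i = ∑ i : Fin n, ∑ j : Fin n, f i j :=
    Finset.sum_comm
  have hgs : ∑ i : Fin n, ∑ j : Fin n, g j i = ∑ i : Fin n, ∑ j : Fin n, g i j :=
    Finset.sum_comm
  have e1 : ∑ i : Fin n, ∑ j : Fin n, (f i j + f j i)
      = (∑ i : Fin n, ∑ j : Fin n, f i j) + ∑ i : Fin n, ∑ j : Fin n, f j i := by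
    simp [Finset.sum_add_distrib]
  have e2 : ∑ i : Fin n, ∑ j : Fin n, (g i j + g j i)
      = (∑ i : Fin n, ∑ j : Fin n, g i j) + ∑ i : Fin n, ∑ j : Fin n, g j i := by
    simp [Finset.sum_add_distrib]
  rw [e1, e2, hfs, hgs] at hsum
  linarith
end

section
/- Fix ε ∈ (0, 1) small and let ρ be uniform on [0, 1). For positive reals p_i > p_j, let p̄_i, p̄_j be their randomized roundings to the grid {(1+ε)^{ρ+t} : t ∈ ℤ}. Then E[|p̄_i − p̄_j|] = Θ(1) · |p_i − p_j|; in particular (1/3)|p_i − p_j| ≤ E[|p̄_i − p̄_j|] ≤ C·|p_i − p_j| for a universal constant C (e.g., C = (1+ε)²·(ε/ln(1+ε)) suffices for the upper bound up to constants). -/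
open MeasureTheory

/-- Randomized geometric rounding with offset `ρ`: the smallest number of the form
`(1+ε)^(ρ+t)`, `t ∈ ℤ`, that is at least `x`. -/
noncomputable def geomRound (ε ρ x : ℝ) : ℝ :=
  (1 + ε) ^ ((ρ + (⌈Real.logb (1 + ε) x - ρ⌉ : ℤ) : ℝ))

/-!
Writing `L = log_{1+ε} p`, the rounding is `p̄ = p · (1+ε)^{fract(ρ - L)}`, and `fract(ρ - L)` is
uniform on `[0,1)` when `ρ` is, so `E[p̄] = p · ε / log(1+ε)` exactly. Rounding is monotone, hence
`E|p̄_i - p̄_j| = (p_i - p_j) · ε / log(1+ε)`, and `1 ≤ ε / log(1+ε) ≤ 1 + ε/2`.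
-/

open Set Real

lemma geomRound_eq_mul_rpow_fract {ε : ℝ} (hε : 0 < ε) {x : ℝ} (hx : 0 < x) (ρ : ℝ) :
    geomRound ε ρ x = x * (1 + ε) ^ Int.fract (ρ - logb (1 + ε) x) := by
  have hexp : ρ + ((⌈logb (1 + ε) x - ρ⌉ : ℤ) : ℝ)
      = logb (1 + ε) x + Int.fract (ρ - logb (1 + ε) x) := by
    rw [← neg_sub, Int.ceil_neg, Int.fract]
    push_cast
    ring
  rw [geomRound, hexp, rpow_add (by linarith), rpow_logb (by linarith) (by linarith) hx]

lemma geomRound_le_geomRound {ε : ℝ} (hε : 0 < ε) {x y : ℝ} (hx : 0 < x) (hxy : x ≤ y)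
    (ρ : ℝ) : geomRound ε ρ x ≤ geomRound ε ρ y := by
  have hb : 1 < 1 + ε := by linarith
  apply rpow_le_rpow_of_exponent_le hb.le
  have hceil : ⌈logb (1 + ε) x - ρ⌉ ≤ ⌈logb (1 + ε) y - ρ⌉ :=
    Int.ceil_le_ceil (sub_le_sub_right (logb_le_logb_of_le hb hx hxy) ρ)
  have : (⌈logb (1 + ε) x - ρ⌉ : ℝ) ≤ ⌈logb (1 + ε) y - ρ⌉ := by exact_mod_cast hceil
  linarith

lemma integral_rpow_fract {b : ℝ} (hb₀ : 0 < b) (hb₁ : b ≠ 1) :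
    ∫ u in (0 : ℝ)..1, b ^ Int.fract u = (b - 1) / log b := by
  have hfract : ∫ u in (0 : ℝ)..1, b ^ Int.fract u = ∫ u in (0 : ℝ)..1, exp (u * log b) := by
    rw [intervalIntegral.integral_of_le zero_le_one, intervalIntegral.integral_of_le zero_le_one,
      integral_Ioc_eq_integral_Ioo, integral_Ioc_eq_integral_Ioo]
    refine setIntegral_congr_fun measurableSet_Ioo fun u hu => ?_
    rw [Int.fract_eq_self.2 ⟨hu.1.le, hu.2⟩, rpow_def_of_pos hb₀, mul_comm]
  have hlog : log b ≠ 0 := log_ne_zero_of_pos_of_ne_one hb₀ hb₁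
  rw [hfract, intervalIntegral.integral_comp_mul_right exp hlog]
  simp [exp_log hb₀, div_eq_inv_mul]

lemma setIntegral_Ico_rpow_fract_sub {b : ℝ} (hb₀ : 0 < b) (hb₁ : b ≠ 1) (L : ℝ) :
    ∫ ρ in Ico (0 : ℝ) 1, b ^ Int.fract (ρ - L) = (b - 1) / log b := by
  have hper : Function.Periodic (fun u : ℝ => b ^ Int.fract u) 1 := fun u => by
    simp only [Int.fract_add_one]
  rw [integral_Ico_eq_integral_Ioo, ← integral_Ioc_eq_integral_Ioo,
    ← intervalIntegral.integral_of_le zero_le_one,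
    intervalIntegral.integral_comp_sub_right (fun u => b ^ Int.fract u) L,
    ← integral_rpow_fract hb₀ hb₁]
  simpa [neg_add_eq_sub] using hper.intervalIntegral_add_eq (-L) 0

lemma setIntegral_Ico_geomRound {ε : ℝ} (hε : 0 < ε) {x : ℝ} (hx : 0 < x) :
    ∫ ρ in Ico (0 : ℝ) 1, geomRound ε ρ x = x * (ε / log (1 + ε)) := by
  simp_rw [geomRound_eq_mul_rpow_fract hε hx]
  rw [integral_const_mul, setIntegral_Ico_rpow_fract_sub (by linarith) (by linarith)]
  ring_nf

lemma setIntegral_Ico_abs_geomRound_sub {ε : ℝ} (hε : 0 < ε) {x y : ℝ} (hx : 0 < x)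
    (hxy : x ≤ y) :
    ∫ ρ in Ico (0 : ℝ) 1, |geomRound ε ρ y - geomRound ε ρ x| = (y - x) * (ε / log (1 + ε)) := by
  have hratio : 0 < ε / log (1 + ε) := div_pos hε (log_pos (by linarith))
  -- integrability comes for free: both integrals are nonzero
  have hint {z : ℝ} (hz : 0 < z) : IntegrableOn (fun ρ => geomRound ε ρ z) (Ico 0 1) :=
    Integrable.of_integral_ne_zero <| by
      rw [setIntegral_Ico_geomRound hε hz]; positivity
  simp_rw [abs_of_nonneg (sub_nonneg.2 (geomRound_le_geomRound hε hx hxy _))]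
  rw [integral_sub (hint (hx.trans_le hxy)) (hint hx), setIntegral_Ico_geomRound hε hx,
    setIntegral_Ico_geomRound hε (hx.trans_le hxy)]
  ring

lemma one_le_div_log_one_add {ε : ℝ} (hε : 0 < ε) : 1 ≤ ε / log (1 + ε) := by
  rw [one_le_div (log_pos (by linarith))]
  linarith [log_le_sub_one_of_pos (show 0 < 1 + ε by linarith)]

lemma div_log_one_add_le {ε : ℝ} (hε : 0 < ε) : ε / log (1 + ε) ≤ 1 + ε / 2 := by
  have h := le_log_one_add_of_nonneg hε.le
  rw [div_le_iff₀ (by positivity)] at h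
  rw [div_le_iff₀ (log_pos (by linarith))]
  linarith

/-- With `ρ` uniform on `[0,1)`, the expected rounded gap `E|p̄_i − p̄_j|` is within
constant factors of `|p_i − p_j|`: at least `(1/3)|p_i − p_j|`, and at most a
universal constant times `|p_i − p_j|`, for all small enough `ε`. -/
theorem expected_rounded_gap_comparable :
    ∃ C : ℝ, 0 < C ∧ ∃ ε₀ : ℝ, 0 < ε₀ ∧
      ∀ ε : ℝ, ε ∈ Set.Ioo (0 : ℝ) ε₀ →
        ∀ pi pj : ℝ, 0 < pj → pj < pi →
          (1 / 3) * |pi - pj| ≤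
              ∫ ρ in Set.Ico (0 : ℝ) 1, |geomRound ε ρ pi - geomRound ε ρ pj| ∧
            ∫ ρ in Set.Ico (0 : ℝ) 1, |geomRound ε ρ pi - geomRound ε ρ pj| ≤
              C * |pi - pj| := by
  refine ⟨3 / 2, by norm_num, 1, one_pos, ?_⟩
  rintro ε ⟨hε, hε₁⟩ pi pj hpj hji
  rw [setIntegral_Ico_abs_geomRound_sub hε hpj hji.le, abs_of_pos (sub_pos.2 hji)]
  have hlower := one_le_div_log_one_add hε
  have hupper := div_log_one_add_le hε
  have hgap : 0 < pi - pj := sub_pos.2 hji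
  constructor <;> nlinarith
end

section
/- In the online fractional load balancing combining algorithm run with β = min_{ℓ ∈ [k]} max_i Σ_j p_{ij} x_{ij}^ℓ, the resulting combined fractional assignment has makespan at most 2H_k·β, where H_k = Σ_{ℓ=1}^k 1/ℓ is the k-th harmonic number; in particular the makespan is O(β log k). -/
/-- Makespan bound for the online combining algorithm run with the best makespan
`β = min_ℓ max_i ∑_j p_{ij} x_{ij}^ℓ`: under the structure of the algorithm (solutions
removed in order `0, …, k-1`, weights at most `1/(k-ℓ)` while active, per-edge loads
at most `β` when weighted, accumulated makespan at most `β` before removal), every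
machine's combined load `∑_j p_{ij} ∑_ℓ α_j^ℓ x_{ij}^ℓ` is at most `2 H_k β`. -/
theorem combining_makespan_bound (k m n : ℕ) (β : ℝ) (hβ : 0 ≤ β)
    (p : Fin m → Fin n → ℝ) (x : Fin k → Fin m → Fin n → ℝ)
    (α : Fin k → Fin n → ℝ) (jrem : Fin k → ℕ)
    (hp : ∀ i j, 0 ≤ p i j) (hx : ∀ ℓ i j, 0 ≤ x ℓ i j)
    (hα0 : ∀ ℓ j, 0 ≤ α ℓ j)
    (hαle : ∀ (ℓ : Fin k) (j : Fin n), α ℓ j ≠ 0 → α ℓ j ≤ 1 / ((k : ℝ) - (ℓ : ℕ)))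
    (hedge : ∀ (ℓ : Fin k) (i : Fin m) (j : Fin n), α ℓ j ≠ 0 → p i j * x ℓ i j ≤ β)
    (hactive : ∀ (ℓ : Fin k) (j : Fin n), α ℓ j ≠ 0 → (j : ℕ) ≤ jrem ℓ)
    (hprefix : ∀ (ℓ : Fin k) (i : Fin m),
      ∑ j ∈ Finset.univ.filter (fun j : Fin n => (j : ℕ) < jrem ℓ), p i j * x ℓ i j ≤ β)
    (hβdef : ∃ ℓ : Fin k, ∀ i : Fin m, ∑ j : Fin n, p i j * x ℓ i j ≤ β) :
    ∀ i : Fin m,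
      ∑ j : Fin n, p i j * (∑ ℓ : Fin k, α ℓ j * x ℓ i j) ≤
        2 * (∑ ℓ ∈ Finset.range k, (1 : ℝ) / (ℓ + 1)) * β := by
  intro i
  have hswap : ∑ j : Fin n, p i j * (∑ ℓ : Fin k, α ℓ j * x ℓ i j)
      = ∑ ℓ : Fin k, ∑ j : Fin n, α ℓ j * (p i j * x ℓ i j) := by
    rw [Finset.sum_comm]
    congr 1; ext j
    rw [Finset.mul_sum]
    congr 1; ext ℓ; ring
  rw [hswap]
  -- Per-solution bound: each inner sum ≤ (1/(k-ℓ)) * (2β)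
  have key : ∀ ℓ : Fin k, ∑ j : Fin n, α ℓ j * (p i j * x ℓ i j)
      ≤ (1 / ((k : ℝ) - (ℓ : ℕ))) * (2 * β) := by
    intro ℓ
    have hkℓ : (0 : ℝ) < (k : ℝ) - (ℓ : ℕ) := by
      have := ℓ.isLt
      have : ((ℓ : ℕ) : ℝ) < (k : ℝ) := by exact_mod_cast this
      linarith
    set T : Finset (Fin n) := Finset.univ.filter (fun j : Fin n => α ℓ j ≠ 0) with hT
    have hsub : ∑ j : Fin n, α ℓ j * (p i j * x ℓ i j)
        = ∑ j ∈ T, α ℓ j * (p i j * x ℓ i j) := by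
      rw [hT, Finset.sum_filter]
      apply Finset.sum_congr rfl
      intro j _
      by_cases h : α ℓ j = 0 <;> simp [h]
    rw [hsub]
    have step1 : ∑ j ∈ T, α ℓ j * (p i j * x ℓ i j)
        ≤ ∑ j ∈ T, (1 / ((k : ℝ) - (ℓ : ℕ))) * (p i j * x ℓ i j) := by
      apply Finset.sum_le_sum
      intro j hj
      have hjne : α ℓ j ≠ 0 := by
        simp [hT, Finset.mem_filter] at hj; exact hj
      exact mul_le_mul_of_nonneg_right (hαle ℓ j hjne)
        (mul_nonneg (hp i j) (hx ℓ i j))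
    refine step1.trans ?_
    rw [← Finset.mul_sum]
    apply mul_le_mul_of_nonneg_left _ (by positivity)
    -- Now show ∑_{j ∈ T} p x ≤ 2β. Split T into j < jrem ℓ and j = jrem ℓ.
    have hsplit : T ⊆ (Finset.univ.filter (fun j : Fin n => (j : ℕ) < jrem ℓ))
        ∪ (T.filter (fun j : Fin n => (j : ℕ) = jrem ℓ)) := by
      intro j hj
      have hjne : α ℓ j ≠ 0 := by
        simp [hT, Finset.mem_filter] at hj; exact hj
      have := hactive ℓ j hjne
      rcases lt_or_eq_of_le this with h | h
      · exact Finset.mem_union_left _ (Finset.mem_filter.mpr ⟨Finset.mem_univ _, h⟩)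
      · exact Finset.mem_union_right _ (Finset.mem_filter.mpr ⟨hj, h⟩)
    have hbound : ∑ j ∈ T, p i j * x ℓ i j
        ≤ ∑ j ∈ (Finset.univ.filter (fun j : Fin n => (j : ℕ) < jrem ℓ))
            ∪ (T.filter (fun j : Fin n => (j : ℕ) = jrem ℓ)), p i j * x ℓ i j := by
      apply Finset.sum_le_sum_of_subset_of_nonneg hsplit
      intro j _ _
      exact mul_nonneg (hp i j) (hx ℓ i j)
    refine hbound.trans ?_
    have hinter := Finset.sum_union_inter
      (s₁ := Finset.univ.filter (fun j : Fin n => (j : ℕ) < jrem ℓ))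
      (s₂ := T.filter (fun j : Fin n => (j : ℕ) = jrem ℓ))
      (f := fun j => p i j * x ℓ i j)
    have hnonneg : 0 ≤ ∑ j ∈ (Finset.univ.filter (fun j : Fin n => (j : ℕ) < jrem ℓ))
        ∩ (T.filter (fun j : Fin n => (j : ℕ) = jrem ℓ)), p i j * x ℓ i j :=
      Finset.sum_nonneg (fun j _ => mul_nonneg (hp i j) (hx ℓ i j))
    have h1 : ∑ j ∈ Finset.univ.filter (fun j : Fin n => (j : ℕ) < jrem ℓ),
        p i j * x ℓ i j ≤ β := hprefix ℓ i
    have h2 : ∑ j ∈ T.filter (fun j : Fin n => (j : ℕ) = jrem ℓ), p i j * x ℓ i j ≤ β := by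
      set t := T.filter (fun j : Fin n => (j : ℕ) = jrem ℓ) with ht
      have hcard : t.card ≤ 1 := by
        rw [Finset.card_le_one]
        intro a ha b hb
        have ha' := (Finset.mem_filter.mp ha).2
        have hb' := (Finset.mem_filter.mp hb).2
        exact Fin.ext (ha'.trans hb'.symm)
      have hterm : ∀ j ∈ t, p i j * x ℓ i j ≤ β := by
        intro j hj
        have hjT := (Finset.mem_filter.mp hj).1
        have hjne : α ℓ j ≠ 0 := by
          simp [hT, Finset.mem_filter] at hjT; exact hjT
        exact hedge ℓ i j hjne
      calc ∑ j ∈ t, p i j * x ℓ i j ≤ t.card • β := Finset.sum_le_card_nsmul t _ β hterm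
        _ ≤ 1 • β := by
            exact nsmul_le_nsmul_left hβ hcard
        _ = β := one_smul _ _
    nlinarith [hinter, hnonneg, h1, h2]
  refine le_trans (Finset.sum_le_sum (fun ℓ _ => key ℓ)) ?_
  -- reindex the harmonic sum
  have hre : ∑ ℓ : Fin k, (1 / ((k : ℝ) - (ℓ : ℕ))) * (2 * β)
      = 2 * (∑ ℓ ∈ Finset.range k, (1 : ℝ) / (ℓ + 1)) * β := by
    have hrefl : ∑ j ∈ Finset.range k, (1 : ℝ) / (j + 1)
        = ∑ j ∈ Finset.range k, 1 / ((k : ℝ) - j) := by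
      rw [← Finset.sum_range_reflect (fun j => 1 / ((k : ℝ) - j)) k]
      apply Finset.sum_congr rfl
      intro j hj
      have hj' : j < k := Finset.mem_range.mp hj
      have hc : ((k - 1 - j : ℕ) : ℝ) = (k : ℝ) - (j + 1) := by
        have he : k - 1 - j = k - (j + 1) := by omega
        rw [he, Nat.cast_sub (by omega : j + 1 ≤ k)]
        push_cast; ring
      rw [hc]
      congr 1
      ring
    rw [← Finset.sum_mul, Fin.sum_univ_eq_sum_range (fun ℓ => 1 / ((k : ℝ) - ℓ)), ← hrefl]
    ring
  rw [hre]
end
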